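/- arXiv:1607.00324 — 2 statements merged into one kernel-verified Lean document; each statement's English description precedes it below -/
import Mathlib

section
/- Let G(s,t) = e^{1/s}·(sin(1/s + t) - 5/4) for s < 0, and let η : ℝ → [0,1] be a smooth nondecreasing function with η(s) = 0 for s < -δ and η(s) = 1 for s > -δ/2, for some δ > 0. Define F(s,t) = (1-η(s))·s + η(s)·G(s,t) for s < 0 and F(s,t) = 0 for s ≥ 0. Then for all s < 0 and t ∈ ℝ, the derivative of F in the direction of the vector field v = s²·∂_s + ∂_t is strictly positive: s²·∂F/∂s(s,t) + ∂F/∂t(s,t) > 0. -/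
private lemma mono_deriv_nonneg {f : ℝ → ℝ} (hf : Monotone f) (s : ℝ)
    (hd : DifferentiableAt ℝ f s) : 0 ≤ deriv f s := by
  have h := hd.hasDerivAt
  rw [hasDerivAt_iff_tendsto_slope] at h
  refine ge_of_tendsto h ?_
  filter_upwards [self_mem_nhdsWithin] with x hx
  have hxs : x ≠ s := hx
  rcases lt_or_gt_of_ne hxs with h1 | h1
  · have h2 : f x ≤ f s := hf h1.le
    rw [slope_def_field]
    exact div_nonneg_iff.mpr (Or.inr ⟨by linarith, by linarith⟩)
  · have h2 : f s ≤ f x := hf h1.le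
    rw [slope_def_field]
    apply div_nonneg <;> linarith

private lemma exp_lb {y : ℝ} (hy : 0 < y) : 9/4 * y < Real.exp y := by
  have h1 : y ≤ Real.exp (y - 1) := by linarith [Real.add_one_le_exp (y - 1)]
  have h2 : Real.exp 1 * Real.exp (y - 1) = Real.exp y := by
    rw [← Real.exp_add]; ring_nf
  have he : (9:ℝ)/4 < Real.exp 1 := by linarith [Real.exp_one_gt_d9]
  nlinarith [Real.exp_pos (y - 1)]

private lemma exp_key {s : ℝ} (hs : s < 0) : 9/4 * Real.exp (1/s) < -s := by
  have hy0 : 0 < -(1/s) := by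
    have h : 1/s < 0 := div_neg_of_pos_of_neg one_pos hs
    linarith
  have h := exp_lb hy0
  have hE : Real.exp (1/s) = (Real.exp (-(1/s)))⁻¹ := by
    rw [← Real.exp_neg]; ring_nf
  rw [hE]
  have hY : 0 < Real.exp (-(1/s)) := Real.exp_pos _
  have hns : 0 < -s := by linarith
  have hs0 : s ≠ 0 := hs.ne
  have hprod : -s * (-(1/s)) = 1 := by field_simp
  have h2 : 9/4 < -s * Real.exp (-(1/s)) := by nlinarith
  calc 9/4 * (Real.exp (-(1/s)))⁻¹
      < (-s * Real.exp (-(1/s))) * (Real.exp (-(1/s)))⁻¹ :=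
        mul_lt_mul_of_pos_right h2 (inv_pos.mpr hY)
    _ = -s := by field_simp

private lemma pos_final {A A' s E S : ℝ} (hs2 : 0 < s^2) (hA' : 0 ≤ A') (hA0 : 0 ≤ A)
    (hA1 : A ≤ 1) (hkey : E * (5/4 - S) < -s) (ht3 : 0 < E * (5/4 - S)) :
    0 < s^2 * A' * (E * (S - 5/4) - s) + (1 - A) * s^2 + A * (E * (5/4 - S)) := by
  have h1 : 0 ≤ s^2 * A' * (E * (S - 5/4) - s) := by
    have hgt : 0 < E * (S - 5/4) - s := by nlinarith
    positivity
  rcases lt_or_ge A 1 with h | h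
  · have h2 : 0 < (1 - A) * s^2 := mul_pos (by linarith) hs2
    have h3 : 0 ≤ A * (E * (5/4 - S)) := mul_nonneg hA0 ht3.le
    linarith
  · have hA : A = 1 := le_antisymm hA1 h
    rw [hA]
    simp only [sub_self, zero_mul, one_mul]
    linarith

/-- With `G(s,t) = e^{1/s}(sin(1/s+t)-5/4)` for `s<0` (`0` for `s ≥ 0`), `η` a smooth
nondecreasing cutoff with values in `[0,1]`, `η = 0` for `s < -δ`, `η = 1` for `s > -δ/2`,
and `F(s,t) = (1-η(s))s + η(s)G(s,t)` for `s < 0`, `F = 0` for `s ≥ 0`: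
for all `s < 0`, `t`, the derivative of `F` along `v = s²∂_s + ∂_t` is strictly positive. -/
theorem stmt_4 (δ : ℝ) (hδ : 0 < δ) (η : ℝ → ℝ)
    (hη : ContDiff ℝ (⊤ : ℕ∞) η) (hmono : Monotone η)
    (hrange : ∀ s, η s ∈ Set.Icc (0:ℝ) 1)
    (hη0 : ∀ s, s < -δ → η s = 0) (hη1 : ∀ s, -δ/2 < s → η s = 1)
    (G : ℝ × ℝ → ℝ)
    (hG : ∀ p : ℝ × ℝ, G p =
      if p.1 < 0 then Real.exp (1/p.1) * (Real.sin (1/p.1 + p.2) - 5/4) else 0)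
    (F : ℝ × ℝ → ℝ)
    (hF : ∀ p : ℝ × ℝ, F p =
      if p.1 < 0 then (1 - η p.1) * p.1 + η p.1 * G p else 0)
    (s t : ℝ) (hs : s < 0) :
    0 < s^2 * deriv (fun x => F (x, t)) s + deriv (fun y => F (s, y)) t := by
  have hs0 : s ≠ 0 := hs.ne
  have hηd : DifferentiableAt ℝ η s := (hη.differentiable (by simp)) s
  have hinv : HasDerivAt (fun x : ℝ => 1/x) (-(s^2)⁻¹) s := by
    simpa [one_div] using hasDerivAt_inv hs0
  have hexp' : HasDerivAt (fun x : ℝ => Real.exp (1/x)) (Real.exp (1/s) * -(s^2)⁻¹) s :=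
    hinv.exp
  have hsin' : HasDerivAt (fun x : ℝ => Real.sin (1/x + t) - 5/4)
      (Real.cos (1/s + t) * -(s^2)⁻¹) s :=
    ((hinv.add_const t).sin).sub_const (5/4)
  have hg : HasDerivAt (fun x => Real.exp (1/x) * (Real.sin (1/x + t) - 5/4))
      (Real.exp (1/s) * -(s^2)⁻¹ * (Real.sin (1/s + t) - 5/4)
        + Real.exp (1/s) * (Real.cos (1/s + t) * -(s^2)⁻¹)) s :=
    hexp'.mul hsin'
  have h1 : HasDerivAt (fun x => (1 - η x) * x)
      ((0 - deriv η s) * s + (1 - η s) * 1) s :=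
    ((hasDerivAt_const s (1:ℝ)).sub hηd.hasDerivAt).mul (hasDerivAt_id s)
  have h2 : HasDerivAt (fun x => η x * (Real.exp (1/x) * (Real.sin (1/x + t) - 5/4)))
      (deriv η s * (Real.exp (1/s) * (Real.sin (1/s + t) - 5/4))
        + η s * (Real.exp (1/s) * -(s^2)⁻¹ * (Real.sin (1/s + t) - 5/4)
          + Real.exp (1/s) * (Real.cos (1/s + t) * -(s^2)⁻¹))) s :=
    hηd.hasDerivAt.mul hg
  have hFs : HasDerivAt
      (fun x => (1 - η x) * x + η x * (Real.exp (1/x) * (Real.sin (1/x + t) - 5/4)))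
      ((0 - deriv η s) * s + (1 - η s) * 1
        + (deriv η s * (Real.exp (1/s) * (Real.sin (1/s + t) - 5/4))
          + η s * (Real.exp (1/s) * -(s^2)⁻¹ * (Real.sin (1/s + t) - 5/4)
            + Real.exp (1/s) * (Real.cos (1/s + t) * -(s^2)⁻¹)))) s :=
    h1.add h2
  have heq : (fun x => F (x, t)) =ᶠ[nhds s]
      (fun x => (1 - η x) * x + η x * (Real.exp (1/x) * (Real.sin (1/x + t) - 5/4))) := by
    filter_upwards [eventually_lt_nhds hs] with x hx
    rw [hF, hG]; simp [hx]
  have hds : deriv (fun x => F (x, t)) s =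
      (0 - deriv η s) * s + (1 - η s) * 1
        + (deriv η s * (Real.exp (1/s) * (Real.sin (1/s + t) - 5/4))
          + η s * (Real.exp (1/s) * -(s^2)⁻¹ * (Real.sin (1/s + t) - 5/4)
            + Real.exp (1/s) * (Real.cos (1/s + t) * -(s^2)⁻¹))) := by
    rw [heq.deriv_eq]; exact hFs.deriv
  have heqt : (fun y => F (s, y)) =
      (fun y => (1 - η s) * s + η s * (Real.exp (1/s) * (Real.sin (1/s + y) - 5/4))) := by
    funext y
    rw [hF, hG]; simp [hs]
  have hsin2 : HasDerivAt (fun y : ℝ => Real.sin (1/s + y)) (Real.cos (1/s + t) * 1) t :=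
    ((hasDerivAt_id t).const_add (1/s)).sin
  have hFt : HasDerivAt
      (fun y => (1 - η s) * s + η s * (Real.exp (1/s) * (Real.sin (1/s + y) - 5/4)))
      (η s * (Real.exp (1/s) * (Real.cos (1/s + t) * 1))) t :=
    (((hsin2.sub_const (5/4)).const_mul (Real.exp (1/s))).const_mul (η s)).const_add
      ((1 - η s) * s)
  have hdt : deriv (fun y => F (s, y)) t = η s * (Real.exp (1/s) * (Real.cos (1/s + t) * 1)) := by
    rw [heqt]; exact hFt.deriv
  rw [hds, hdt]
  have hsq : s^2 * (s^2)⁻¹ = 1 := mul_inv_cancel₀ (pow_ne_zero 2 hs0)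
  have hexpr : s^2 * ((0 - deriv η s) * s + (1 - η s) * 1
        + (deriv η s * (Real.exp (1/s) * (Real.sin (1/s + t) - 5/4))
          + η s * (Real.exp (1/s) * -(s^2)⁻¹ * (Real.sin (1/s + t) - 5/4)
            + Real.exp (1/s) * (Real.cos (1/s + t) * -(s^2)⁻¹))))
      + η s * (Real.exp (1/s) * (Real.cos (1/s + t) * 1))
      = s^2 * deriv η s * (Real.exp (1/s) * (Real.sin (1/s + t) - 5/4) - s)
        + (1 - η s) * s^2 + η s * (Real.exp (1/s) * (5/4 - Real.sin (1/s + t))) := by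
    have hss : (s:ℝ)^2 ≠ 0 := pow_ne_zero 2 hs0
    field_simp
    ring
  rw [hexpr]
  have hEpos : 0 < Real.exp (1/s) := Real.exp_pos _
  have hSle : Real.sin (1/s + t) ≤ 1 := Real.sin_le_one _
  have hkey : Real.exp (1/s) * (5/4 - Real.sin (1/s + t)) < -s := by
    have hSge : -1 ≤ Real.sin (1/s + t) := Real.neg_one_le_sin _
    have h1 : Real.exp (1/s) * (5/4 - Real.sin (1/s + t)) ≤ 9/4 * Real.exp (1/s) := by
      nlinarith
    linarith [exp_key hs]
  exact pos_final (by positivity) (mono_deriv_nonneg hmono s hηd) (hrange s).1 (hrange s).2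
    hkey (by nlinarith)
end

section
/- Let z : [0,∞) → ℝ be differentiable and let c : [0,∞) → (0,∞) be continuous. Suppose that for all τ ≥ 0: √2·sin(z(τ) + π/4) - 11/8 ≤ z'(τ)/c(τ) ≤ √2·sin(z(τ) + π/4) - 9/8. Then z is bounded on [0,∞). -/
/-!
The forcing term `√2 sin(z + π/4)` is `2π`-periodic and takes values below `9/8` and above `11/8`.
At a level `a ≥ z 0` where it is below `9/8` the upper inequality forces `z' < 0`, so `z` can never
cross `a` upwards; at a level `b ≤ z 0` where it is above `11/8` the lower inequality forces `z' > 0`,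
so `z` can never cross `b` downwards. Periodicity provides such levels above and below any point.
-/

open Real Set Function

theorem le_of_deriv_neg_of_eq {f : ℝ → ℝ} {x₀ a : ℝ}
    (hf : ∀ t ≥ x₀, DifferentiableAt ℝ f t) (h₀ : f x₀ ≤ a)
    (hbarrier : ∀ t ≥ x₀, f t = a → deriv f t < 0) {t : ℝ} (ht : x₀ ≤ t) : f t ≤ a := by
  have hcont : ContinuousOn f (Icc x₀ t) := fun s hs => (hf s hs.1).continuousAt.continuousWithinAt
  refine image_le_of_deriv_right_lt_deriv_boundary' (f' := deriv f) (B' := fun _ => 0) hcont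
    (fun s hs => (hf s hs.1).hasDerivAt.hasDerivWithinAt) h₀ continuousOn_const
    (fun _ _ => hasDerivWithinAt_const _ _ a) (fun s hs => hbarrier s hs.1) ⟨ht, le_rfl⟩

theorem exists_upper_bound_of_deriv_div_le_periodic {z c g : ℝ → ℝ} {x₀ T κ : ℝ}
    (hz : ∀ t ≥ x₀, DifferentiableAt ℝ z t) (hc : ∀ t ≥ x₀, 0 < c t)
    (hg : Periodic g T) (hT : 0 < T) (hκ : ∃ x, g x < κ)
    (hineq : ∀ t ≥ x₀, deriv z t / c t ≤ g (z t) - κ) :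
    ∃ a, ∀ t ≥ x₀, z t ≤ a := by
  obtain ⟨x, hx⟩ := hκ
  obtain ⟨a, ha, hga⟩ := hg.exists_mem_Ico hT x (z x₀)
  refine ⟨a, fun t ht => le_of_deriv_neg_of_eq hz ha.1 (fun s hs hza => ?_) ht⟩
  have hdiv : deriv z s / c s < 0 := by linarith [hineq s hs, hza ▸ hga]
  by_contra! hnonneg
  exact hdiv.not_ge (div_nonneg hnonneg (hc s hs).le)

theorem exists_lower_bound_of_le_deriv_div_periodic {z c g : ℝ → ℝ} {x₀ T κ : ℝ}
    (hz : ∀ t ≥ x₀, DifferentiableAt ℝ z t) (hc : ∀ t ≥ x₀, 0 < c t)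
    (hg : Periodic g T) (hT : 0 < T) (hκ : ∃ x, κ < g x)
    (hineq : ∀ t ≥ x₀, g (z t) - κ ≤ deriv z t / c t) :
    ∃ b, ∀ t ≥ x₀, b ≤ z t := by
  obtain ⟨x, hx⟩ := hκ
  have hg' : Periodic (fun y => -g (-y)) T := fun y => by
    simp only [neg_add, ← sub_eq_add_neg, hg.sub_eq]
  obtain ⟨a, ha⟩ := exists_upper_bound_of_deriv_div_le_periodic (z := fun t => -z t) (κ := -κ)
    (fun t ht => (hz t ht).neg) hc hg' hT ⟨-x, by simpa using hx⟩ fun t ht => by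
      simp only [deriv.fun_neg, neg_div, neg_neg]
      linarith [hineq t ht]
  exact ⟨-a, fun t ht => neg_le.mp (ha t ht)⟩

theorem periodic_sqrt_two_mul_sin_add_pi_div_four :
    Periodic (fun x => √2 * sin (x + π / 4)) (2 * π) :=
  (sin_periodic.add_const (π / 4)).comp (√2 * ·)

theorem stmt_7_general (z c : ℝ → ℝ)
    (hz : ∀ τ : ℝ, 0 ≤ τ → DifferentiableAt ℝ z τ)
    (hcpos : ∀ τ : ℝ, 0 ≤ τ → 0 < c τ)
    (hineq : ∀ τ : ℝ, 0 ≤ τ →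
      Real.sqrt 2 * Real.sin (z τ + Real.pi/4) - 11/8 ≤ deriv z τ / c τ ∧
      deriv z τ / c τ ≤ Real.sqrt 2 * Real.sin (z τ + Real.pi/4) - 9/8) :
    ∃ C : ℝ, ∀ τ : ℝ, 0 ≤ τ → |z τ| ≤ C := by
  have hsmall : √2 * sin (-(π / 4) + π / 4) < 9 / 8 := by norm_num
  have hlarge : 11 / 8 < √2 * sin (π / 4 + π / 4) := by
    rw [show π / 4 + π / 4 = π / 2 by ring, sin_pi_div_two, mul_one, lt_sqrt (by norm_num)]
    norm_num
  obtain ⟨a, ha⟩ := exists_upper_bound_of_deriv_div_le_periodic hz hcpos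
    periodic_sqrt_two_mul_sin_add_pi_div_four two_pi_pos ⟨_, hsmall⟩ fun τ hτ => (hineq τ hτ).2
  obtain ⟨b, hb⟩ := exists_lower_bound_of_le_deriv_div_periodic hz hcpos
    periodic_sqrt_two_mul_sin_add_pi_div_four two_pi_pos ⟨_, hlarge⟩ fun τ hτ => (hineq τ hτ).1
  exact ⟨max a (-b), fun τ hτ => abs_le.mpr
    ⟨by linarith [hb τ hτ, le_max_right a (-b)], (ha τ hτ).trans (le_max_left a (-b))⟩⟩

/-- Differential-inequality lemma: if `z : [0,∞) → ℝ` is differentiable,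
`c : [0,∞) → (0,∞)` is continuous, and for all `τ ≥ 0`
`√2 sin(z(τ)+π/4) - 11/8 ≤ z'(τ)/c(τ) ≤ √2 sin(z(τ)+π/4) - 9/8`,
then `z` is bounded on `[0,∞)`. -/
theorem stmt_7 (z c : ℝ → ℝ)
    (hz : ∀ τ : ℝ, 0 ≤ τ → DifferentiableAt ℝ z τ)
    (hc : ContinuousOn c (Set.Ici (0:ℝ)))
    (hcpos : ∀ τ : ℝ, 0 ≤ τ → 0 < c τ)
    (hineq : ∀ τ : ℝ, 0 ≤ τ →
      Real.sqrt 2 * Real.sin (z τ + Real.pi/4) - 11/8 ≤ deriv z τ / c τ ∧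
      deriv z τ / c τ ≤ Real.sqrt 2 * Real.sin (z τ + Real.pi/4) - 9/8) :
    ∃ C : ℝ, ∀ τ : ℝ, 0 ≤ τ → |z τ| ≤ C :=
  stmt_7_general z c hz hcpos hineq
end
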